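/- arXiv:1401.5086 — 5 statements merged into one kernel-verified Lean document; each statement's English description precedes it below -/
import Mathlib

section
/- Let f, g ∈ ℂ[x], k ≥ 1, and let I, J ⊆ ℕ be finite sets with |I|, |J| ≥ k. (a) For every z ∈ R_{I,J}, the pair (f − F_I(z,·), g − G_J(z,·)) belongs to Ω_{I,J,k}(f,g). (b) If the function z ↦ f(z)* M_I(z)⁻¹ f(z) + g(z)* M_J(z)⁻¹ g(z) attains its minimum over R_{I,J} at some ζ ∈ R_{I,J}, then ‖F_I(ζ,·)‖² + ‖G_J(ζ,·)‖² is the least element of the set { ‖f − f̃‖² + ‖g − g̃‖² : (f̃, g̃) ∈ Ω_{I,J,k}(f,g) }. -/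
/-!
For `V` of full row rank and any `c` with `V c = b`, the vector `c₀ = V† b = V* (V V*)⁻¹ b`
lies in the range of `V*`, so `⟪c₀, c⟫ = b* (V V*)⁻¹ b = ‖c₀‖²` and
`‖c‖² = ‖c₀‖² + ‖c - c₀‖² ≥ b* (V V*)⁻¹ b`: `V† b` is the least-norm solution.
If `f̃` vanishes at `z` and `f - f̃` is supported on `I`, the coefficient vector `c` of
`f - f̃` solves `V_I(z) c = f(z)`, so `‖f - f̃‖² ≥ f(z)* M_I(z)⁻¹ f(z)`, with equality for
`f - f̃ = F_I(z,·)`, whose coefficient vector is `V_I(z)† f(z)`. Adding the same bound for `g`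
and using the minimality of `ζ` gives (b).
-/

open Matrix

noncomputable section

/-- The generalized Vandermonde matrix `V_K(z)` with `(s,t)` entry `z_s ^ i_t`. -/
def vand {k p : ℕ} (e : Fin p → ℕ) (z : Fin k → ℂ) : Matrix (Fin k) (Fin p) ℂ :=
  Matrix.of fun s t => z s ^ e t

/-- Moore–Penrose pseudoinverse `V† = V*(VV*)⁻¹` of a full-row-rank matrix. -/
def pinv {k p : ℕ} (V : Matrix (Fin k) (Fin p) ℂ) : Matrix (Fin p) (Fin k) ℂ :=
  V.conjTranspose * (V * V.conjTranspose)⁻¹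

/-- The generalized Lagrange polynomial `L_{K,i}(z,x) = Σ_t (V_K(z)†)_{t,i} x^{i_t}`. -/
def lag {k p : ℕ} (e : Fin p → ℕ) (z : Fin k → ℂ) (i : Fin k) : Polynomial ℂ :=
  ∑ t : Fin p, Polynomial.C (pinv (vand e z) t i) * Polynomial.X ^ e t

/-- `M_K(z) = V_K(z) V_K(z)*`. -/
def MI {k p : ℕ} (e : Fin p → ℕ) (z : Fin k → ℂ) : Matrix (Fin k) (Fin k) ℂ :=
  vand e z * (vand e z).conjTranspose

/-- Squared l²-norm of the coefficient vector of a polynomial. -/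
def polyNormSq (F : Polynomial ℂ) : ℝ :=
  ∑ m ∈ F.support, ‖F.coeff m‖ ^ 2

/-- `F_K(z,·) := Σ_i f(z_i) L_{K,i}(z,·)`, the minimal-norm interpolant of `f` at `z`
with support `K`. -/
def FI {k p : ℕ} (e : Fin p → ℕ) (f : Polynomial ℂ) (z : Fin k → ℂ) : Polynomial ℂ :=
  ∑ i : Fin k, Polynomial.C (f.eval (z i)) * lag e z i

/-- The vector `(f(z₁),…,f(z_k))`. -/
def evalVec {k : ℕ} (f : Polynomial ℂ) (z : Fin k → ℂ) : Fin k → ℂ :=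
  fun i => f.eval (z i)

/-- `Ω_{I,J,k}(f,g)`: pairs `(f̃,g̃)` with `f−f̃ ∈ ℂ[x]_I`, `g−g̃ ∈ ℂ[x]_J`, having `k`
common roots forming a point of `R_{I,J}`. -/
def Omega (k : ℕ) {p q : ℕ} (e : Fin p → ℕ) (d : Fin q → ℕ) (f g : Polynomial ℂ) :
    Set (Polynomial ℂ × Polynomial ℂ) :=
  { fg | (f - fg.1).support ⊆ Finset.image e Finset.univ ∧
         (g - fg.2).support ⊆ Finset.image d Finset.univ ∧
         ∃ z : Fin k → ℂ, (vand e z).rank = k ∧ (vand d z).rank = k ∧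
           ∀ i : Fin k, fg.1.eval (z i) = 0 ∧ fg.2.eval (z i) = 0 }

open Polynomial

section PseudoInverse

variable {k n : ℕ} (V : Matrix (Fin k) (Fin n) ℂ)

open scoped ComplexOrder in
theorem isUnit_mul_conjTranspose_of_rank_eq (h : V.rank = k) : IsUnit (V * Vᴴ) := by
  have hrank : (V * Vᴴ).rank = k := by rw [Matrix.rank_self_mul_conjTranspose, h]
  have hrange : LinearMap.range (V * Vᴴ).mulVecLin = ⊤ :=
    Submodule.eq_top_of_finrank_eq (by simpa [Matrix.rank] using hrank)
  exact Matrix.mulVec_surjective_iff_isUnit.mp (LinearMap.range_eq_top.mp hrange)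

theorem mul_pinv (h : IsUnit (V * Vᴴ)) : V * pinv V = 1 := by
  rw [pinv, ← Matrix.mul_assoc]
  exact Matrix.mul_nonsing_inv _ ((Matrix.isUnit_iff_isUnit_det _).mp h)

theorem mulVec_pinv_mulVec (h : IsUnit (V * Vᴴ)) (b : Fin k → ℂ) :
    V *ᵥ (pinv V *ᵥ b) = b := by
  rw [Matrix.mulVec_mulVec, mul_pinv V h, Matrix.one_mulVec]

theorem conjTranspose_pinv : (pinv V)ᴴ = (V * Vᴴ)⁻¹ * V := by
  rw [pinv, Matrix.conjTranspose_mul, Matrix.conjTranspose_conjTranspose,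
    Matrix.conjTranspose_nonsing_inv, Matrix.conjTranspose_mul,
    Matrix.conjTranspose_conjTranspose]

theorem star_pinv_mulVec_dotProduct {b : Fin k → ℂ} {c : Fin n → ℂ} (hc : V *ᵥ c = b) :
    star (pinv V *ᵥ b) ⬝ᵥ c = star b ⬝ᵥ ((V * Vᴴ)⁻¹ *ᵥ b) := by
  rw [Matrix.star_mulVec, ← Matrix.dotProduct_mulVec, conjTranspose_pinv,
    ← Matrix.mulVec_mulVec, hc]

theorem re_star_dotProduct_self (u : Fin n → ℂ) : (star u ⬝ᵥ u).re = ∑ t, ‖u t‖ ^ 2 := by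
  simp [dotProduct, Complex.re_sum, Complex.sq_norm, Complex.normSq_apply]

theorem sum_norm_sq_pinv_mulVec (h : IsUnit (V * Vᴴ)) (b : Fin k → ℂ) :
    ∑ t, ‖(pinv V *ᵥ b) t‖ ^ 2 = (star b ⬝ᵥ ((V * Vᴴ)⁻¹ *ᵥ b)).re := by
  rw [← re_star_dotProduct_self,
    star_pinv_mulVec_dotProduct V (mulVec_pinv_mulVec V h b)]

theorem re_star_dotProduct_inv_mulVec_le (h : IsUnit (V * Vᴴ)) {b : Fin k → ℂ}
    {c : Fin n → ℂ} (hc : V *ᵥ c = b) :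
    (star b ⬝ᵥ ((V * Vᴴ)⁻¹ *ᵥ b)).re ≤ ∑ t, ‖c t‖ ^ 2 := by
  set c₀ := pinv V *ᵥ b
  have expand : ∑ t, ‖c t - c₀ t‖ ^ 2
      = ∑ t, ‖c t‖ ^ 2 - 2 * (star c₀ ⬝ᵥ c).re + ∑ t, ‖c₀ t‖ ^ 2 := by
    simp only [dotProduct, Complex.re_sum, Finset.mul_sum, ← Finset.sum_sub_distrib,
      ← Finset.sum_add_distrib]
    refine Finset.sum_congr rfl fun t _ => ?_
    simp only [Complex.sq_norm, Complex.normSq_sub, Pi.star_apply, Complex.star_def]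
    rw [mul_comm (starRingEnd ℂ _)]
    ring
  rw [star_pinv_mulVec_dotProduct V hc, sum_norm_sq_pinv_mulVec V h] at expand
  have := Finset.sum_nonneg fun t (_ : t ∈ Finset.univ) => sq_nonneg ‖c t - c₀ t‖
  linarith

end PseudoInverse

section SupportedPolynomials

variable {p : ℕ} {e : Fin p → ℕ}

theorem sum_eq_sum_coeff_of_support_subset {M : Type*} [AddCommMonoid M]
    (he : Function.Injective e) {h : ℂ[X]} (hs : h.support ⊆ Finset.univ.image e)
    {φ : ℕ → ℂ → M} (hφ : ∀ m, φ m 0 = 0) :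
    h.sum φ = ∑ t, φ (e t) (h.coeff (e t)) := by
  rw [Polynomial.sum_eq_of_subset φ hφ hs, Finset.sum_image fun _ _ _ _ hab => he hab]

theorem polyNormSq_eq_sum_coeff (he : Function.Injective e) {h : ℂ[X]}
    (hs : h.support ⊆ Finset.univ.image e) :
    polyNormSq h = ∑ t, ‖h.coeff (e t)‖ ^ 2 :=
  sum_eq_sum_coeff_of_support_subset he hs (φ := fun _ a => ‖a‖ ^ 2) (by simp)

theorem vand_mulVec_coeff (he : Function.Injective e) {h : ℂ[X]}
    (hs : h.support ⊆ Finset.univ.image e) {k : ℕ} (z : Fin k → ℂ) :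
    vand e z *ᵥ (fun t => h.coeff (e t)) = evalVec h z := by
  funext s
  rw [evalVec, eval_eq_sum, sum_eq_sum_coeff_of_support_subset he hs (by simp)]
  simp only [Matrix.mulVec, dotProduct, vand, Matrix.of_apply, mul_comm]

theorem coeff_sum_C_mul_X_pow (he : Function.Injective e) (c : Fin p → ℂ) (t : Fin p) :
    (∑ s, C (c s) * X ^ e s).coeff (e t) = c t := by
  simp [finsetSum_coeff, he.eq_iff]

theorem support_sum_C_mul_X_pow_subset (c : Fin p → ℂ) :
    (∑ s, C (c s) * X ^ e s).support ⊆ Finset.univ.image e := by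
  intro m hm
  by_contra hm'
  refine mem_support_iff.mp hm ?_
  rw [finsetSum_coeff]
  refine Finset.sum_eq_zero fun s _ => ?_
  rw [coeff_C_mul_X_pow, if_neg]
  rintro rfl
  exact hm' (Finset.mem_image_of_mem e (Finset.mem_univ s))

theorem evalVec_sum_C_mul_X_pow (c : Fin p → ℂ) {k : ℕ} (z : Fin k → ℂ) :
    evalVec (∑ s, C (c s) * X ^ e s) z = vand e z *ᵥ c := by
  funext i
  simp only [evalVec, eval_finsetSum, eval_mul, eval_C, eval_pow, eval_X, Matrix.mulVec,
    dotProduct, vand, Matrix.of_apply]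
  exact Finset.sum_congr rfl fun s _ => mul_comm _ _

end SupportedPolynomials

section Interpolant

variable {k p : ℕ} (e : Fin p → ℕ) (f : ℂ[X]) (z : Fin k → ℂ)

theorem FI_eq_sum_C_mul_X_pow :
    FI e f z = ∑ t, C ((pinv (vand e z) *ᵥ evalVec f z) t) * X ^ e t := by
  simp only [FI, lag, Finset.mul_sum, Matrix.mulVec, dotProduct, map_sum, Finset.sum_mul,
    evalVec, map_mul]
  rw [Finset.sum_comm]
  exact Finset.sum_congr rfl fun t _ => Finset.sum_congr rfl fun i _ => by ring

theorem support_FI_subset : (FI e f z).support ⊆ Finset.univ.image e := by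
  rw [FI_eq_sum_C_mul_X_pow]
  exact support_sum_C_mul_X_pow_subset _

theorem evalVec_FI (h : (vand e z).rank = k) : evalVec (FI e f z) z = evalVec f z := by
  rw [FI_eq_sum_C_mul_X_pow, evalVec_sum_C_mul_X_pow,
    mulVec_pinv_mulVec _ (isUnit_mul_conjTranspose_of_rank_eq _ h)]

theorem polyNormSq_FI (he : Function.Injective e) (h : (vand e z).rank = k) :
    polyNormSq (FI e f z) = (star (evalVec f z) ⬝ᵥ ((MI e z)⁻¹ *ᵥ evalVec f z)).re := by
  rw [polyNormSq_eq_sum_coeff he (support_FI_subset e f z), FI_eq_sum_C_mul_X_pow]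
  simp only [coeff_sum_C_mul_X_pow he]
  exact sum_norm_sq_pinv_mulVec _ (isUnit_mul_conjTranspose_of_rank_eq _ h) _

theorem re_star_dotProduct_inv_MI_le_polyNormSq_sub (he : Function.Injective e) {f' : ℂ[X]}
    (h : (vand e z).rank = k) (hs : (f - f').support ⊆ Finset.univ.image e)
    (hroot : ∀ i, f'.eval (z i) = 0) :
    (star (evalVec f z) ⬝ᵥ ((MI e z)⁻¹ *ᵥ evalVec f z)).re ≤ polyNormSq (f - f') := by
  have hfit : vand e z *ᵥ (fun t => (f - f').coeff (e t)) = evalVec f z := by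
    rw [vand_mulVec_coeff he hs]
    funext i
    simp [evalVec, hroot i]
  rw [polyNormSq_eq_sum_coeff he hs]
  exact re_star_dotProduct_inv_mulVec_le _ (isUnit_mul_conjTranspose_of_rank_eq _ h) hfit

end Interpolant

theorem eval_sub_FI {k p : ℕ} {e : Fin p → ℕ} (f : ℂ[X]) {z : Fin k → ℂ}
    (h : (vand e z).rank = k) (i : Fin k) : (f - FI e f z).eval (z i) = 0 := by
  rw [eval_sub, sub_eq_zero]
  exact (congrFun (evalVec_FI e f z h) i).symm

theorem sub_FI_mem_Omega {k p q : ℕ} {e : Fin p → ℕ} {d : Fin q → ℕ} (f g : ℂ[X])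
    {z : Fin k → ℂ} (he : (vand e z).rank = k) (hd : (vand d z).rank = k) :
    (f - FI e f z, g - FI d g z) ∈ Omega k e d f g := by
  refine ⟨?_, ?_, z, he, hd, fun i => ⟨eval_sub_FI f he i, eval_sub_FI g hd i⟩⟩
  · rw [sub_sub_cancel]; exact support_FI_subset e f z
  · rw [sub_sub_cancel]; exact support_FI_subset d g z

theorem stmt3_general {k p q : ℕ}
    (e : Fin p → ℕ) (he : StrictMono e) (d : Fin q → ℕ) (hd : StrictMono d)
    (f g : Polynomial ℂ) :
    (∀ z : Fin k → ℂ, (vand e z).rank = k → (vand d z).rank = k →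
      (f - FI e f z, g - FI d g z) ∈ Omega k e d f g) ∧
    (∀ ζ : Fin k → ℂ, (vand e ζ).rank = k → (vand d ζ).rank = k →
      (∀ z : Fin k → ℂ, (vand e z).rank = k → (vand d z).rank = k →
        (star (evalVec f ζ) ⬝ᵥ ((MI e ζ)⁻¹ *ᵥ evalVec f ζ)
          + star (evalVec g ζ) ⬝ᵥ ((MI d ζ)⁻¹ *ᵥ evalVec g ζ)).re ≤
        (star (evalVec f z) ⬝ᵥ ((MI e z)⁻¹ *ᵥ evalVec f z)
          + star (evalVec g z) ⬝ᵥ ((MI d z)⁻¹ *ᵥ evalVec g z)).re) →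
      IsLeast { r : ℝ | ∃ fg ∈ Omega k e d f g,
          r = polyNormSq (f - fg.1) + polyNormSq (g - fg.2) }
        (polyNormSq (FI e f ζ) + polyNormSq (FI d g ζ))) := by
  refine ⟨fun z hze hzd => sub_FI_mem_Omega f g hze hzd, fun ζ hζe hζd hmin => ⟨?_, ?_⟩⟩
  · exact ⟨_, sub_FI_mem_Omega f g hζe hζd, by rw [sub_sub_cancel, sub_sub_cancel]⟩
  · rintro r ⟨⟨f', g'⟩, ⟨hsf, hsg, z, hze, hzd, hroot⟩, rfl⟩
    have hf := re_star_dotProduct_inv_MI_le_polyNormSq_sub e f z he.injective hze hsf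
      fun i => (hroot i).1
    have hg := re_star_dotProduct_inv_MI_le_polyNormSq_sub d g z hd.injective hzd hsg
      fun i => (hroot i).2
    have hζz := hmin z hze hzd
    rw [Complex.add_re, Complex.add_re] at hζz
    rw [polyNormSq_FI e f ζ he.injective hζe, polyNormSq_FI d g ζ hd.injective hζd]
    linarith

/-- (a) for each `z ∈ R_{I,J}` the perturbed pair lies in `Ω_{I,J,k}(f,g)`;
(b) if `z ↦ f(z)* M_I(z)⁻¹ f(z) + g(z)* M_J(z)⁻¹ g(z)` attains its minimum over `R_{I,J}`
at `ζ`, then `‖F_I(ζ,·)‖² + ‖G_J(ζ,·)‖²` is the least element of the set of distances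
`‖f−f̃‖² + ‖g−g̃‖²` over `Ω_{I,J,k}(f,g)`. -/
theorem stmt3 {k p q : ℕ} (hk : 1 ≤ k) (hp : k ≤ p) (hq : k ≤ q)
    (e : Fin p → ℕ) (he : StrictMono e) (d : Fin q → ℕ) (hd : StrictMono d)
    (f g : Polynomial ℂ) :
    (∀ z : Fin k → ℂ, (vand e z).rank = k → (vand d z).rank = k →
      (f - FI e f z, g - FI d g z) ∈ Omega k e d f g) ∧
    (∀ ζ : Fin k → ℂ, (vand e ζ).rank = k → (vand d ζ).rank = k →
      (∀ z : Fin k → ℂ, (vand e z).rank = k → (vand d z).rank = k →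
        (star (evalVec f ζ) ⬝ᵥ ((MI e ζ)⁻¹ *ᵥ evalVec f ζ)
          + star (evalVec g ζ) ⬝ᵥ ((MI d ζ)⁻¹ *ᵥ evalVec g ζ)).re ≤
        (star (evalVec f z) ⬝ᵥ ((MI e z)⁻¹ *ᵥ evalVec f z)
          + star (evalVec g z) ⬝ᵥ ((MI d z)⁻¹ *ᵥ evalVec g z)).re) →
      IsLeast { r : ℝ | ∃ fg ∈ Omega k e d f g,
          r = polyNormSq (f - fg.1) + polyNormSq (g - fg.2) }
        (polyNormSq (FI e f ζ) + polyNormSq (FI d g ζ))) :=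
  stmt3_general e he d hd f g
end
end

section
/- Let f, g ∈ ℂ[x], k ≥ 1, finite sets I, J ⊆ ℕ with |I|, |J| ≥ k, and z = (z₁,…,z_k) ∈ R_{I,J}. Then the generalized Weierstrass map vanishes at z — i.e., both polynomials F_I(z,·) and G_J(z,·) are identically zero — if and only if z₁,…,z_k are common roots of f and g, i.e., f(z_i) = g(z_i) = 0 for all i = 1,…,k. -/
open Matrix

noncomputable section

open scoped ComplexOrder in
lemma isUnit_MI {k p : ℕ} (e : Fin p → ℕ) (z : Fin k → ℂ)
    (hz : (vand e z).rank = k) : IsUnit (MI e z) := by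
  rw [← Matrix.mulVec_surjective_iff_isUnit]
  have hrank : (MI e z).rank = k := by
    rw [MI, Matrix.rank_self_mul_conjTranspose, hz]
  rw [Matrix.rank] at hrank
  have htop : LinearMap.range (MI e z).mulVecLin = ⊤ :=
    Submodule.eq_top_of_finrank_eq (by simpa using hrank)
  intro v
  have : v ∈ LinearMap.range (MI e z).mulVecLin := htop ▸ Submodule.mem_top
  obtain ⟨w, hw⟩ := this
  exact ⟨w, hw⟩

lemma vand_mul_pinv {k p : ℕ} (e : Fin p → ℕ) (z : Fin k → ℂ)
    (hz : (vand e z).rank = k) : vand e z * pinv (vand e z) = 1 := by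
  have h := isUnit_MI e z hz
  rw [pinv, ← Matrix.mul_assoc]
  exact Matrix.mul_nonsing_inv _ ((Matrix.isUnit_iff_isUnit_det _).mp h)

lemma FI_coeff {k p : ℕ} (e : Fin p → ℕ) (he : StrictMono e)
    (f : Polynomial ℂ) (z : Fin k → ℂ) (t : Fin p) :
    (FI e f z).coeff (e t) = (pinv (vand e z) *ᵥ evalVec f z) t := by
  simp only [FI, lag, Polynomial.finset_sum_coeff, Polynomial.coeff_C_mul,
    Finset.mul_sum, Polynomial.coeff_X_pow]
  rw [Matrix.mulVec, dotProduct]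
  rw [Finset.sum_comm, Finset.sum_eq_single t]
  · simp [evalVec, mul_comm]
  · intro b _ hb
    apply Finset.sum_eq_zero
    intro x _
    simp [(he.injective.ne_iff).mpr (Ne.symm hb)]
  · simp

lemma FI_eq_zero_iff {k p : ℕ} (e : Fin p → ℕ) (he : StrictMono e)
    (f : Polynomial ℂ) (z : Fin k → ℂ) (hz : (vand e z).rank = k) :
    FI e f z = 0 ↔ ∀ i : Fin k, f.eval (z i) = 0 := by
  constructor
  · intro h i
    have hv : pinv (vand e z) *ᵥ evalVec f z = 0 := by
      funext t
      rw [← FI_coeff e he f z t, h]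
      simp
    have : (vand e z * pinv (vand e z)) *ᵥ evalVec f z = 0 := by
      rw [← Matrix.mulVec_mulVec, hv, Matrix.mulVec_zero]
    rw [vand_mul_pinv e z hz, Matrix.one_mulVec] at this
    exact congrFun this i
  · intro h
    simp only [FI]
    apply Finset.sum_eq_zero
    intro i _
    rw [h i]
    simp

/-- the generalized Weierstrass map vanishes at `z ∈ R_{I,J}` iff
`z₁,…,z_k` are common roots of `f` and `g`. -/
theorem stmt4 {k p q : ℕ} (hk : 1 ≤ k) (hp : k ≤ p) (hq : k ≤ q)
    (e : Fin p → ℕ) (he : StrictMono e) (d : Fin q → ℕ) (hd : StrictMono d)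
    (f g : Polynomial ℂ) (z : Fin k → ℂ)
    (hze : (vand e z).rank = k) (hzd : (vand d z).rank = k) :
    (FI e f z = 0 ∧ FI d g z = 0) ↔
      ∀ i : Fin k, f.eval (z i) = 0 ∧ g.eval (z i) = 0 := by
  rw [forall_and]
  rw [FI_eq_zero_iff e he f z hze, FI_eq_zero_iff d hd g z hzd]
end
end

section
/- Let k, p ≥ 1, let V : ℂ → Matrix(k×p, ℂ) be differentiable at z₀ ∈ ℂ, let A be a constant p×k complex matrix with V(z₀)A invertible, and let G be a constant row vector in ℂ^k. Define the row-vector-valued function u(z) := G (V(z)A)⁻¹ V(z) ∈ ℂ^p on the neighborhood of z₀ where V(z)A is invertible. Then u is differentiable at z₀ and u'(z₀) · A (V(z₀)A)⁻¹ = 0 (the zero row vector in ℂ^k). (Taking A = V(z₀)* and G = F(z₀)*, so that A(V(z₀)A)⁻¹ = V(z₀)† and u = W*, this is the Wirtinger ∂/∂z form of the paper's identity (∂W*/∂z_i) V† = 0, where conjugated quantities are held constant under ∂/∂z.) -/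
/-!
Near `z₀` the matrix `V(z)A` stays invertible, so `u(z) A = G (V(z)A)⁻¹ (V(z)A) = G` is constant
there; differentiating at `z₀` gives `u'(z₀) A = 0`, which is stronger than the claim.
Differentiability of `u` comes from Cramer's rule `M⁻¹ = (det M)⁻¹ • adj M`, whose entries are
rational in the entries of `M`.
-/

open Matrix Filter Topology

namespace Matrix

section

variable {𝕜 : Type*} [NontriviallyNormedField 𝕜] {x : 𝕜} {l m n : Type*}

theorem differentiableAt_mul_apply [Fintype m] {M : 𝕜 → Matrix l m 𝕜} {N : 𝕜 → Matrix m n 𝕜}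
    (hM : ∀ i j, DifferentiableAt 𝕜 (fun y => M y i j) x)
    (hN : ∀ i j, DifferentiableAt 𝕜 (fun y => N y i j) x) (i : l) (j : n) :
    DifferentiableAt 𝕜 (fun y => (M y * N y) i j) x := by
  simp only [mul_apply]
  exact DifferentiableAt.fun_sum fun t _ => (hM i t).mul (hN t j)

theorem differentiableAt_vecMul_apply [Fintype m] {v : 𝕜 → m → 𝕜} {M : 𝕜 → Matrix m n 𝕜}
    (hv : ∀ i, DifferentiableAt 𝕜 (fun y => v y i) x)
    (hM : ∀ i j, DifferentiableAt 𝕜 (fun y => M y i j) x) (j : n) :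
    DifferentiableAt 𝕜 (fun y => (v y ᵥ* M y) j) x := by
  simp only [vecMul, dotProduct]
  exact DifferentiableAt.fun_sum fun t _ => (hv t).mul (hM t j)

theorem differentiableAt_det [Fintype n] [DecidableEq n] {M : 𝕜 → Matrix n n 𝕜}
    (hM : ∀ i j, DifferentiableAt 𝕜 (fun y => M y i j) x) :
    DifferentiableAt 𝕜 (fun y => (M y).det) x := by
  simp only [det_apply, Units.smul_def, zsmul_eq_mul]
  exact DifferentiableAt.fun_sum fun σ _ =>
    (differentiableAt_const _).mul (DifferentiableAt.fun_finsetProd fun i _ => hM (σ i) i)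

theorem differentiableAt_adjugate_apply [Fintype n] [DecidableEq n] {M : 𝕜 → Matrix n n 𝕜}
    (hM : ∀ i j, DifferentiableAt 𝕜 (fun y => M y i j) x) (i j : n) :
    DifferentiableAt 𝕜 (fun y => (M y).adjugate i j) x := by
  simp only [adjugate_apply]
  refine differentiableAt_det fun a b => ?_
  by_cases h : a = j
  · simp only [updateRow_apply, if_pos h]
    exact differentiableAt_const _
  · simpa only [updateRow_apply, if_neg h] using hM a b

theorem differentiableAt_inv_apply [Fintype n] [DecidableEq n] {M : 𝕜 → Matrix n n 𝕜}
    (hM : ∀ i j, DifferentiableAt 𝕜 (fun y => M y i j) x) (hx : IsUnit (M x).det) (i j : n) :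
    DifferentiableAt 𝕜 (fun y => (M y)⁻¹ i j) x := by
  simp only [inv_def, smul_apply, Ring.inverse_eq_inv', smul_eq_mul]
  exact ((differentiableAt_det hM).inv hx.ne_zero).mul (differentiableAt_adjugate_apply hM i j)

theorem eventually_isUnit_det [Fintype n] [DecidableEq n] {M : 𝕜 → Matrix n n 𝕜}
    (hM : ∀ i j, DifferentiableAt 𝕜 (fun y => M y i j) x) (hx : IsUnit (M x).det) :
    ∀ᶠ y in 𝓝 x, IsUnit (M y).det := by
  simpa only [isUnit_iff_ne_zero] using
    (differentiableAt_det hM).continuousAt.eventually_ne hx.ne_zero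

variable [Fintype m] {u : 𝕜 → m → 𝕜} {u' : m → 𝕜}

theorem hasDerivAt_vecMul_const_apply (hu : ∀ i, HasDerivAt (fun w => u w i) (u' i) x)
    (A : Matrix m n 𝕜) (j : n) :
    HasDerivAt (fun w => (u w ᵥ* A) j) ((u' ᵥ* A) j) x := by
  simp only [vecMul, dotProduct]
  exact HasDerivAt.fun_sum fun i _ => (hu i).mul_const (A i j)

theorem vecMul_eq_zero_of_eventually_vecMul_eq (hu : ∀ i, HasDerivAt (fun w => u w i) (u' i) x)
    {A : Matrix m n 𝕜} {c : n → 𝕜} (hc : ∀ᶠ w in 𝓝 x, u w ᵥ* A = c) :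
    u' ᵥ* A = 0 :=
  funext fun j => (hasDerivAt_vecMul_const_apply hu A j).unique <|
    (hasDerivAt_const x (c j)).congr_of_eventuallyEq (hc.mono fun _ hw => congrFun hw j)

end

end Matrix

theorem stmt15_general {k p : ℕ} (z₀ : ℂ)
    (V : ℂ → Matrix (Fin k) (Fin p) ℂ) (V' : Matrix (Fin k) (Fin p) ℂ)
    (hV : ∀ i j, HasDerivAt (fun z => V z i j) (V' i j) z₀)
    (A : Matrix (Fin p) (Fin k) ℂ) (hA : IsUnit (V z₀ * A).det)
    (G : Fin k → ℂ) :
    ∃ u' : Fin p → ℂ,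
      (∀ t : Fin p, HasDerivAt (fun z => (G ᵥ* ((V z * A)⁻¹ * V z)) t) (u' t) z₀) ∧
      u' ᵥ* (A * (V z₀ * A)⁻¹) = 0 := by
  have hVd i j : DifferentiableAt ℂ (fun z => V z i j) z₀ := (hV i j).differentiableAt
  have hVA := differentiableAt_mul_apply hVd fun i j => differentiableAt_const (A i j)
  have hu := differentiableAt_vecMul_apply (fun i => differentiableAt_const (G i))
    (differentiableAt_mul_apply (differentiableAt_inv_apply hVA hA) hVd)
  have hconst : ∀ᶠ z in 𝓝 z₀, G ᵥ* ((V z * A)⁻¹ * V z) ᵥ* A = G :=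
    (eventually_isUnit_det hVA hA).mono fun z hz => by
      rw [vecMul_vecMul, Matrix.mul_assoc, nonsing_inv_mul _ hz, vecMul_one]
  have hderiv t := (hu t).hasDerivAt
  refine ⟨_, hderiv, ?_⟩
  rw [← vecMul_vecMul, vecMul_eq_zero_of_eventually_vecMul_eq hderiv hconst, zero_vecMul]

/-- for `u(z) := G (V(z)A)⁻¹ V(z)` (a row vector, with `A`, `G` constant and
`V(z₀)A` invertible), `u` is differentiable at `z₀` (entrywise) and
`u'(z₀) · A (V(z₀)A)⁻¹ = 0`. Taking `A = V(z₀)*` and `G = F(z₀)*`, this is the Wirtinger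
`∂/∂z` form of the identity `(∂W*/∂z) V† = 0`. -/
theorem stmt15 {k p : ℕ} (hk : 1 ≤ k) (hp : 1 ≤ p) (z₀ : ℂ)
    (V : ℂ → Matrix (Fin k) (Fin p) ℂ) (V' : Matrix (Fin k) (Fin p) ℂ)
    (hV : ∀ i j, HasDerivAt (fun z => V z i j) (V' i j) z₀)
    (A : Matrix (Fin p) (Fin k) ℂ) (hA : IsUnit (V z₀ * A).det)
    (G : Fin k → ℂ) :
    ∃ u' : Fin p → ℂ,
      (∀ t : Fin p, HasDerivAt (fun z => (G ᵥ* ((V z * A)⁻¹ * V z)) t) (u' t) z₀) ∧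
      u' ᵥ* (A * (V z₀ * A)⁻¹) = 0 :=
  stmt15_general z₀ V V' hV A hA G
end

section
/- Let n, k ≥ 1, let B = (b₁,…,b_k) be a list of exactly k analytic functions ℂⁿ → ℂ, let f : ℂⁿ → ℂ be analytic, and let z = (z₁,…,z_k) ∈ (ℂⁿ)^k be such that the k×k matrix V_B(z) is invertible. Define p(z,x) := Σ_{i=1}^k f(z_i) L_{B,i}(z,x). Fix x₀ ∈ ℂⁿ, i ∈ {1,…,k}, and j ∈ {1,…,n}. Then the function of one complex variable w ↦ p(z(w), x₀), where z(w) is obtained from z by replacing the j-th coordinate of z_i by w, is complex differentiable at w = (z_i)_j with derivative equal to ( ∂(f − p(z,·))/∂x_j evaluated at z_i ) · L_{B,i}(z, x₀), where ∂/∂x_j denotes the partial derivative of a function ℂⁿ → ℂ with respect to its j-th argument. -/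
/-!
The coefficient vector `c(w) = V(w)⁻¹ f(Z(w))` of the interpolant at the moved nodes `Z(w)` is
differentiable by Cramer's rule, and `V(w) c(w) = f(Z(w))` near `w = (z_i)_j`. Moving `z_i` only
changes row `i` of `V` and entry `i` of the right-hand side, so differentiating this identity gives
`V c' = r eᵢ` with `r = ∂ⱼf(zᵢ) - Σₜ cₜ ∂ⱼbₜ(zᵢ) = ∂ⱼ(f - p(z,·))(zᵢ)`. Hence `c'` is `r` times the
`i`-th column of `V⁻¹`, and `Σₜ c'ₜ bₜ(x₀) = r L_{B,i}(z,x₀)`.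
-/

open Matrix

noncomputable section

/-- The (square) generalized Vandermonde matrix `V_B(z)` with `(i,j)` entry `b_j(z_i)`. -/
def vandB {n k : ℕ} (B : Fin k → (Fin n → ℂ) → ℂ) (z : Fin k → Fin n → ℂ) :
    Matrix (Fin k) (Fin k) ℂ :=
  Matrix.of fun i j => B j (z i)

/-- The generalized Lagrange function `L_{B,i}(z,x) = Σ_t (V_B(z)⁻¹)_{t,i} b_t(x)` in the
square case `|B| = k`. -/
def lagB {n k : ℕ} (B : Fin k → (Fin n → ℂ) → ℂ) (z : Fin k → Fin n → ℂ) (i : Fin k)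
    (x : Fin n → ℂ) : ℂ :=
  ∑ t : Fin k, (vandB B z)⁻¹ t i * B t x

/-- `p(z,·) := Σ_i f(z_i) L_{B,i}(z,·)`. -/
def pB {n k : ℕ} (B : Fin k → (Fin n → ℂ) → ℂ) (f : (Fin n → ℂ) → ℂ)
    (z : Fin k → Fin n → ℂ) (x : Fin n → ℂ) : ℂ :=
  ∑ i : Fin k, f (z i) * lagB B z i x

/-- The partial derivative `∂g/∂x_j` of `g : ℂⁿ → ℂ` at `a`. -/
def pderiv' {n : ℕ} (j : Fin n) (g : (Fin n → ℂ) → ℂ) (a : Fin n → ℂ) : ℂ :=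
  deriv (fun w => g (Function.update a j w)) (a j)

section MatrixCalculus

variable {𝕜 ι : Type*} [NontriviallyNormedField 𝕜] [Fintype ι]
  {M : 𝕜 → Matrix ι ι 𝕜} {w₀ : 𝕜}

theorem hasDerivAt_matrix_mulVec {M' : Matrix ι ι 𝕜} {c : 𝕜 → ι → 𝕜} {c' : ι → 𝕜}
    (hM : ∀ s t, HasDerivAt (fun w => M w s t) (M' s t) w₀) (hc : HasDerivAt c c' w₀) :
    HasDerivAt (fun w => M w *ᵥ c w) (M' *ᵥ c w₀ + M w₀ *ᵥ c') w₀ := by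
  refine hasDerivAt_pi.2 fun s => ?_
  simp only [Matrix.mulVec, dotProduct, Pi.add_apply, ← Finset.sum_add_distrib]
  exact .fun_sum fun t _ => (hM s t).mul (hasDerivAt_pi.1 hc t)

theorem hasDerivAt_dotProduct_const {c : 𝕜 → ι → 𝕜} {c' : ι → 𝕜} (hc : HasDerivAt c c' w₀)
    (b : ι → 𝕜) : HasDerivAt (fun w => c w ⬝ᵥ b) (c' ⬝ᵥ b) w₀ := by
  simp only [dotProduct]
  exact .fun_sum fun t _ => (hasDerivAt_pi.1 hc t).mul_const _

variable [DecidableEq ι]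

theorem differentiableAt_matrix_det (hM : ∀ s t, DifferentiableAt 𝕜 (fun w => M w s t) w₀) :
    DifferentiableAt 𝕜 (fun w => (M w).det) w₀ := by
  simp only [Matrix.det_apply']
  exact .fun_sum fun σ _ => .const_mul (.fun_finsetProd fun s _ => hM (σ s) s) _

theorem differentiableAt_matrix_adjugate_apply
    (hM : ∀ s t, DifferentiableAt 𝕜 (fun w => M w s t) w₀) (s t : ι) :
    DifferentiableAt 𝕜 (fun w => (M w).adjugate s t) w₀ := by
  simp only [Matrix.adjugate_apply]
  refine differentiableAt_matrix_det fun a b => ?_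
  by_cases h : a = t
  · subst h
    simpa only [Matrix.updateRow_self] using differentiableAt_const _
  · simpa only [Matrix.updateRow_ne h] using hM a b

theorem differentiableAt_matrix_inv_apply
    (hM : ∀ s t, DifferentiableAt 𝕜 (fun w => M w s t) w₀) (hdet : (M w₀).det ≠ 0) (s t : ι) :
    DifferentiableAt 𝕜 (fun w => (M w)⁻¹ s t) w₀ := by
  simp only [Matrix.inv_def, Ring.inverse_eq_inv', Matrix.smul_apply, smul_eq_mul]
  exact ((differentiableAt_matrix_det hM).inv hdet).mul
    (differentiableAt_matrix_adjugate_apply hM s t)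

theorem hasDerivAt_matrix_inv_mulVec {M' : Matrix ι ι 𝕜} {v : 𝕜 → ι → 𝕜} {v' : ι → 𝕜}
    (hM : ∀ s t, HasDerivAt (fun w => M w s t) (M' s t) w₀) (hv : HasDerivAt v v' w₀)
    (hdet : (M w₀).det ≠ 0) :
    HasDerivAt (fun w => (M w)⁻¹ *ᵥ v w)
      ((M w₀)⁻¹ *ᵥ (v' - M' *ᵥ ((M w₀)⁻¹ *ᵥ v w₀))) w₀ := by
  have hc : DifferentiableAt 𝕜 (fun w => (M w)⁻¹ *ᵥ v w) w₀ := by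
    refine differentiableAt_pi.2 fun s => ?_
    simp only [Matrix.mulVec, dotProduct]
    exact .fun_sum fun t _ => (differentiableAt_matrix_inv_apply
      (fun a b => (hM a b).differentiableAt) hdet s t).mul (hasDerivAt_pi.1 hv t).differentiableAt
  have hsolve : (fun w => M w *ᵥ ((M w)⁻¹ *ᵥ v w)) =ᶠ[nhds w₀] v := by
    have hdet_cont : ContinuousAt (fun w => (M w).det) w₀ :=
      (differentiableAt_matrix_det fun a b => (hM a b).differentiableAt).continuousAt
    filter_upwards [hdet_cont.eventually_ne hdet] with w hw
    rw [Matrix.mulVec_mulVec, Matrix.mul_nonsing_inv _ (isUnit_iff_ne_zero.2 hw),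
      Matrix.one_mulVec]
  have hlin := (hasDerivAt_matrix_mulVec hM hc.hasDerivAt).unique (hv.congr_of_eventuallyEq hsolve)
  refine hc.hasDerivAt.congr_deriv ?_
  rw [← hlin, add_sub_cancel_left, Matrix.mulVec_mulVec,
    Matrix.nonsing_inv_mul _ (isUnit_iff_ne_zero.2 hdet), Matrix.one_mulVec]

end MatrixCalculus

section Interpolation

variable {n : ℕ}

theorem hasDerivAt_update_pderiv' {g : (Fin n → ℂ) → ℂ} {a : Fin n → ℂ} (j : Fin n)
    (hg : DifferentiableAt ℂ g a) :
    HasDerivAt (fun w => g (Function.update a j w)) (pderiv' j g a) (a j) :=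
  (DifferentiableAt.comp (a j) (by rwa [Function.update_eq_self])
    (hasDerivAt_update a j (a j)).differentiableAt).hasDerivAt

theorem hasDerivAt_update_update_apply {ι : Type*} [DecidableEq ι] {g : (Fin n → ℂ) → ℂ}
    (z : ι → Fin n → ℂ) (i : ι) (j : Fin n) (hg : DifferentiableAt ℂ g (z i)) (s : ι) :
    HasDerivAt (fun w => g (Function.update z i (Function.update (z i) j w) s))
      ((Pi.single i (pderiv' j g (z i)) : ι → ℂ) s) (z i j) := by
  by_cases h : s = i
  · subst h
    simpa only [Function.update_self, Pi.single_eq_same] using hasDerivAt_update_pderiv' j hg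
  · simpa only [Function.update_of_ne h, Pi.single_eq_of_ne h] using hasDerivAt_const _ _

variable {k : ℕ}

theorem pB_eq_dotProduct (B : Fin k → (Fin n → ℂ) → ℂ) (f : (Fin n → ℂ) → ℂ)
    (z : Fin k → Fin n → ℂ) (x : Fin n → ℂ) :
    pB B f z x = ((vandB B z)⁻¹ *ᵥ fun s => f (z s)) ⬝ᵥ fun t => B t x := by
  simp only [pB, lagB, Matrix.mulVec, dotProduct, Finset.mul_sum, Finset.sum_mul]
  rw [Finset.sum_comm]
  exact Finset.sum_congr rfl fun _ _ => Finset.sum_congr rfl fun _ _ => by ring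

theorem pderiv'_sub_pB {B : Fin k → (Fin n → ℂ) → ℂ} {f : (Fin n → ℂ) → ℂ} {a : Fin n → ℂ}
    (hB : ∀ t, DifferentiableAt ℂ (B t) a) (hf : DifferentiableAt ℂ f a)
    (z : Fin k → Fin n → ℂ) (j : Fin n) :
    pderiv' j (fun x => f x - pB B f z x) a =
      pderiv' j f a - ((vandB B z)⁻¹ *ᵥ fun s => f (z s)) ⬝ᵥ fun t => pderiv' j (B t) a := by
  have hp : HasDerivAt (fun w => pB B f z (Function.update a j w))
      (((vandB B z)⁻¹ *ᵥ fun s => f (z s)) ⬝ᵥ fun t => pderiv' j (B t) a) (a j) := by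
    simp only [pB_eq_dotProduct, dotProduct]
    exact .fun_sum fun t _ => (hasDerivAt_update_pderiv' j (hB t)).const_mul _
  exact ((hasDerivAt_update_pderiv' j hf).sub hp).deriv

end Interpolation

theorem stmt17_general {n k : ℕ}
    (B : Fin k → (Fin n → ℂ) → ℂ) (hBa : ∀ t, AnalyticOnNhd ℂ (B t) Set.univ)
    (f : (Fin n → ℂ) → ℂ) (hf : AnalyticOnNhd ℂ f Set.univ)
    (z : Fin k → Fin n → ℂ) (hz : IsUnit (vandB B z).det)
    (x₀ : Fin n → ℂ) (i : Fin k) (j : Fin n) :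
    HasDerivAt
      (fun w : ℂ => pB B f (Function.update z i (Function.update (z i) j w)) x₀)
      (pderiv' j (fun x => f x - pB B f z x) (z i) * lagB B z i x₀)
      (z i j) := by
  have hdiff {g : (Fin n → ℂ) → ℂ} (hg : AnalyticOnNhd ℂ g Set.univ) :
      DifferentiableAt ℂ g (z i) :=
    (hg _ trivial).differentiableAt
  set D : Fin k → ℂ := fun t => pderiv' j (B t) (z i)
  have hc := hasDerivAt_matrix_inv_mulVec
    (M := fun w => vandB B (Function.update z i (Function.update (z i) j w)))
    (M' := Matrix.of fun s t => (Pi.single i (D t) : Fin k → ℂ) s)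
    (v' := Pi.single i (pderiv' j f (z i)))
    (fun s t => hasDerivAt_update_update_apply z i j (hdiff (hBa t)) s)
    (hasDerivAt_pi.2 (hasDerivAt_update_update_apply z i j (hdiff hf)))
    (by simpa only [Function.update_eq_self] using hz.ne_zero)
  simp only [Function.update_eq_self] at hc
  have hM'c (c : Fin k → ℂ) :
      (Matrix.of fun s t => (Pi.single i (D t) : Fin k → ℂ) s) *ᵥ c = Pi.single i (D ⬝ᵥ c) := by
    ext s
    by_cases h : s = i
    · subst h; simp [Matrix.mulVec, dotProduct]
    · simp [Matrix.mulVec, dotProduct, Pi.single_eq_of_ne h]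
  rw [pderiv'_sub_pB (fun t => hdiff (hBa t)) (hdiff hf)]
  simp only [pB_eq_dotProduct]
  refine (hasDerivAt_dotProduct_const hc _).congr_deriv ?_
  rw [hM'c, ← Pi.single_sub, dotProduct_comm D]
  simp only [lagB, dotProduct, Matrix.mulVec, Pi.single_apply, mul_ite, mul_zero,
    Finset.sum_ite_eq', Finset.mem_univ, if_true, Finset.mul_sum]
  exact Finset.sum_congr rfl fun _ _ => by ring

/-- for `|B| = k` and `V_B(z)` invertible, the function
`w ↦ p(z[(z_i)_j ← w], x₀)` is complex differentiable at `w = (z_i)_j` with derivative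
`(∂(f − p(z,·))/∂x_j)(z_i) · L_{B,i}(z, x₀)`. -/
theorem stmt17 {n k : ℕ} (hn : 1 ≤ n) (hk : 1 ≤ k)
    (B : Fin k → (Fin n → ℂ) → ℂ) (hBa : ∀ t, AnalyticOnNhd ℂ (B t) Set.univ)
    (f : (Fin n → ℂ) → ℂ) (hf : AnalyticOnNhd ℂ f Set.univ)
    (z : Fin k → Fin n → ℂ) (hz : IsUnit (vandB B z).det)
    (x₀ : Fin n → ℂ) (i : Fin k) (j : Fin n) :
    HasDerivAt
      (fun w : ℂ => pB B f (Function.update z i (Function.update (z i) j w)) x₀)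
      (pderiv' j (fun x => f x - pB B f z x) (z i) * lagB B z i x₀)
      (z i j) :=
  stmt17_general B hBa f hf z hz x₀ i j
end
end

section
/- Let N > n ≥ 1, k ≥ 1, let f₁,…,f_N : ℂⁿ → ℂ be analytic, and for each t = 1,…,N let B_t be a list of exactly k analytic functions ℂⁿ → ℂ. Let z = (z₁,…,z_k) ∈ R_{\vec B} (so each k×k matrix V_{B_t}(z) is invertible) and define p_t(z,x) := Σ_{j=1}^k f_t(z_j) L_{B_t,j}(z,x). Suppose there exists an open neighborhood U ⊆ (ℂⁿ)^k of z such that for all z̃ = (z̃₁,…,z̃_k) ∈ U, all z' ∈ U, and all i = 1,…,k: Σ_{t=1}^N |p_t(z, z̃_i)|² ≤ Σ_{t=1}^N |p_t(z', z̃_i)|². Then for all i = 1,…,k and j = 1,…,n: Σ_{t=1}^N ( ∂(f_t − p_t(z,·))/∂x_j evaluated at z_i ) · conj(f_t(z_i)) = 0; equivalently, J_z(z_i)* f(z_i) = 0 for each i, where J_z(x) is the N×n Jacobian matrix of (f₁ − p₁(z,·),…,f_N − p_N(z,·)) at x and f(z_i) = (f₁(z_i),…,f_N(z_i)); in particular z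 is a fixed point of the simplified Gauss-Newton iteration z_i ↦ z_i − J_z(z_i)† f(z_i) whenever rank J_z(z_i) = n for all i. -/
open Matrix

noncomputable section

/-- The Jacobian matrix `J_z(x)` of `(f₁ − p₁(z,·), …, f_N − p_N(z,·))` at `x`. -/
def Jz {N n k : ℕ} (f : Fin N → (Fin n → ℂ) → ℂ) (B : Fin N → Fin k → (Fin n → ℂ) → ℂ)
    (z : Fin k → Fin n → ℂ) (x : Fin n → ℂ) : Matrix (Fin N) (Fin n) ℂ :=
  Matrix.of fun t j => pderiv' j (fun y => f t y - pB (B t) (f t) z y) x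

/-!
Perturb only the `j`-th coordinate of the node `z i`, to `w`, obtaining nodes `y(w)`. For `w` near
`z i j` the nodes `y(w)` are still unisolvent for every `B t`, so `p_t(y(w), ·)` interpolates `f_t`
at `y(w) i`, and the hypothesis with `zt = z' = y(w)` reads
`∑ ‖p_t(z, y(w) i)‖² ≤ ∑ ‖f_t(y(w) i)‖²`, with equality at `w = z i j`. Hence the real function
`w ↦ ∑ (‖f_t‖² - ‖p_t(z, ·)‖²)(y(w) i)` has a local minimum at `z i j`; its real derivative is
`v ↦ 2 Re (v ∑ ∂_j(f_t - p_t(z, ·))(z i) conj (f_t (z i)))`, and this vanishes for all `v` only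
if the sum does. The Gauss-Newton statement is the same identity read as `J_z(z i)ᴴ f(z i) = 0`.
-/

open scoped ComplexConjugate Topology

theorem pB_apply_self {n k : ℕ} (B : Fin k → (Fin n → ℂ) → ℂ) (f : (Fin n → ℂ) → ℂ)
    {y : Fin k → Fin n → ℂ} (hy : IsUnit (vandB B y).det) (i : Fin k) :
    pB B f y (y i) = f (y i) := by
  have hlag : ∀ s, lagB B y s (y i) = (vandB B y * (vandB B y)⁻¹) i s := fun s => by
    simp only [lagB, Matrix.mul_apply, vandB, Matrix.of_apply, mul_comm]
  simp [pB, hlag, Matrix.mul_nonsing_inv _ hy, Matrix.one_apply]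

theorem differentiable_pB {n k : ℕ} {B : Fin k → (Fin n → ℂ) → ℂ}
    (hB : ∀ s, Differentiable ℂ (B s)) (f : (Fin n → ℂ) → ℂ) (z : Fin k → Fin n → ℂ) :
    Differentiable ℂ (pB B f z) := by
  unfold pB lagB
  fun_prop

theorem isOpen_setOf_isUnit_det_vandB {n k : ℕ} {B : Fin k → (Fin n → ℂ) → ℂ}
    (hB : ∀ s, Continuous (B s)) : IsOpen {y | IsUnit (vandB B y).det} := by
  simp only [isUnit_iff_ne_zero]
  refine isOpen_ne_fun (Continuous.matrix_det ?_) continuous_const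
  exact continuous_matrix fun i s => (hB s).comp (continuous_apply i)

theorem eq_zero_of_isLocalMin_of_hasFDerivAt_re_mul {φ : ℂ → ℝ} {L : ℂ →L[ℝ] ℝ} {w₀ a : ℂ}
    (hmin : IsLocalMin φ w₀) (hφ : HasFDerivAt φ L w₀) (hL : ∀ v, L v = (a * v).re) :
    a = 0 := by
  have h := hL (conj a)
  rwa [hmin.hasFDerivAt_eq_zero hφ, Complex.mul_conj, Complex.ofReal_re, _root_.zero_apply,
    eq_comm, Complex.normSq_eq_zero] at h

theorem sum_deriv_sub_mul_conj_eq_zero {ι : Type*} (s : Finset ι) {F P : ι → ℂ → ℂ} {w₀ : ℂ}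
    (hF : ∀ t ∈ s, DifferentiableAt ℂ (F t) w₀) (hP : ∀ t ∈ s, DifferentiableAt ℂ (P t) w₀)
    (heq : ∀ t ∈ s, F t w₀ = P t w₀)
    (hle : ∀ᶠ w in 𝓝 w₀, ∑ t ∈ s, ‖P t w‖ ^ 2 ≤ ∑ t ∈ s, ‖F t w‖ ^ 2) :
    ∑ t ∈ s, deriv (fun w => F t w - P t w) w₀ * conj (F t w₀) = 0 := by
  set φ : ℂ → ℝ := fun w => ∑ t ∈ s, (‖F t w‖ ^ 2 - ‖P t w‖ ^ 2)
  have hmin : IsLocalMin φ w₀ := by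
    have hφ₀ : φ w₀ = 0 := Finset.sum_eq_zero fun t ht => by rw [heq t ht, sub_self]
    filter_upwards [hle] with w hw
    rw [hφ₀]
    simpa only [φ, Finset.sum_sub_distrib, sub_nonneg] using hw
  have hφ := HasFDerivAt.fun_sum fun t ht =>
    ((hF t ht).hasFDerivAt.restrictScalars ℝ).norm_sq.sub
      ((hP t ht).hasFDerivAt.restrictScalars ℝ).norm_sq
  have hderiv : ∀ t ∈ s, deriv (fun w => F t w - P t w) w₀ = deriv (F t) w₀ - deriv (P t) w₀ :=
    fun t ht => deriv_sub (hF t ht) (hP t ht)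
  have htwice := eq_zero_of_isLocalMin_of_hasFDerivAt_re_mul hmin hφ
    (a := 2 * ∑ t ∈ s, deriv (fun w => F t w - P t w) w₀ * conj (F t w₀)) fun v => by
      rw [FunLike.coe_sum, Finset.sum_apply, Finset.mul_sum, Finset.sum_mul, Complex.re_sum]
      refine Finset.sum_congr rfl fun t ht => ?_
      simp [Complex.inner, heq t ht, hderiv t ht]
      ring
  exact (mul_eq_zero.1 htwice).resolve_left two_ne_zero

theorem eventually_sum_sq_pB_le {N n k : ℕ} {f : Fin N → (Fin n → ℂ) → ℂ}
    {B : Fin N → Fin k → (Fin n → ℂ) → ℂ} (hB : ∀ t s, Continuous (B t s))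
    {z : Fin k → Fin n → ℂ} (hz : ∀ t, IsUnit (vandB (B t) z).det)
    {U : Set (Fin k → Fin n → ℂ)} (hU : IsOpen U) (hzU : z ∈ U)
    (hmin : ∀ zt ∈ U, ∀ z' ∈ U, ∀ i : Fin k,
      (∑ t, ‖pB (B t) (f t) z (zt i)‖ ^ 2) ≤ ∑ t, ‖pB (B t) (f t) z' (zt i)‖ ^ 2) :
    ∀ᶠ y in 𝓝 z, ∀ i, ∑ t, ‖pB (B t) (f t) z (y i)‖ ^ 2 ≤ ∑ t, ‖f t (y i)‖ ^ 2 := by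
  have hunisolvent : ∀ᶠ y in 𝓝 z, ∀ t, IsUnit (vandB (B t) y).det :=
    Filter.eventually_all.2 fun t => (isOpen_setOf_isUnit_det_vandB (hB t)).mem_nhds (hz t)
  filter_upwards [hU.eventually_mem hzU, hunisolvent] with y hyU hy i
  simpa only [pB_apply_self _ _ (hy _)] using hmin y hyU y hyU i

theorem sum_pderiv_sub_pB_mul_conj_eq_zero {N n k : ℕ} {f : Fin N → (Fin n → ℂ) → ℂ}
    (hf : ∀ t, Differentiable ℂ (f t)) {B : Fin N → Fin k → (Fin n → ℂ) → ℂ}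
    (hB : ∀ t s, Differentiable ℂ (B t s)) {z : Fin k → Fin n → ℂ}
    (hz : ∀ t, IsUnit (vandB (B t) z).det)
    (hle : ∀ᶠ y in 𝓝 z, ∀ i, ∑ t, ‖pB (B t) (f t) z (y i)‖ ^ 2 ≤ ∑ t, ‖f t (y i)‖ ^ 2)
    (i : Fin k) (j : Fin n) :
    ∑ t, pderiv' j (fun y => f t y - pB (B t) (f t) z y) (z i) * conj (f t (z i)) = 0 := by
  set u : ℂ → Fin n → ℂ := fun w => Function.update (z i) j w
  have hu : u (z i j) = z i := Function.update_eq_self j (z i)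
  have hud : ∀ w, DifferentiableAt ℂ u w := fun w => (hasDerivAt_update (z i) j w).differentiableAt
  have hy : Filter.Tendsto (fun w => Function.update z i (u w)) (𝓝 (z i j)) (𝓝 z) := by
    have hc : ContinuousAt (fun w => Function.update z i (u w)) (z i j) := by fun_prop
    rwa [ContinuousAt, hu, Function.update_eq_self] at hc
  have hle' : ∀ᶠ w in 𝓝 (z i j), ∑ t, ‖pB (B t) (f t) z (u w)‖ ^ 2 ≤ ∑ t, ‖f t (u w)‖ ^ 2 := by
    filter_upwards [hy.eventually hle] with w hw
    simpa only [Function.update_self] using hw i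
  have h := sum_deriv_sub_mul_conj_eq_zero Finset.univ
    (F := fun t w => f t (u w)) (P := fun t w => pB (B t) (f t) z (u w))
    (fun t _ => (hf t _).comp _ (hud _))
    (fun t _ => (differentiable_pB (hB t) (f t) z _).comp _ (hud _))
    (fun t _ => by simp only [hu, pB_apply_self _ _ (hz t)]) hle'
  rw [hu] at h
  exact h

theorem stmt18_general {N n k : ℕ}
    (f : Fin N → (Fin n → ℂ) → ℂ) (hf : ∀ t, AnalyticOnNhd ℂ (f t) Set.univ)
    (B : Fin N → Fin k → (Fin n → ℂ) → ℂ) (hBa : ∀ t s, AnalyticOnNhd ℂ (B t s) Set.univ)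
    (z : Fin k → Fin n → ℂ) (hz : ∀ t, IsUnit (vandB (B t) z).det)
    (U : Set (Fin k → Fin n → ℂ)) (hU : IsOpen U) (hzU : z ∈ U)
    (hmin : ∀ zt ∈ U, ∀ z' ∈ U, ∀ i : Fin k,
      (∑ t, ‖pB (B t) (f t) z (zt i)‖ ^ 2) ≤ ∑ t, ‖pB (B t) (f t) z' (zt i)‖ ^ 2) :
    (∀ (i : Fin k) (j : Fin n),
      (∑ t, pderiv' j (fun y => f t y - pB (B t) (f t) z y) (z i)
          * (starRingEnd ℂ) (f t (z i))) = 0) ∧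
    ((∀ i : Fin k, (Jz f B z (z i)).rank = n) →
      ∀ i : Fin k,
        z i - (((Jz f B z (z i))ᴴ * Jz f B z (z i))⁻¹ * (Jz f B z (z i))ᴴ) *ᵥ
            (fun t => f t (z i)) = z i) := by
  have hfd : ∀ t, Differentiable ℂ (f t) := fun t => differentiableOn_univ.1 (hf t).differentiableOn
  have hBd : ∀ t s, Differentiable ℂ (B t s) := fun t s =>
    differentiableOn_univ.1 (hBa t s).differentiableOn
  have hstat := sum_pderiv_sub_pB_mul_conj_eq_zero hfd hBd hz
    (eventually_sum_sq_pB_le (fun t s => (hBd t s).continuous) hz hU hzU hmin)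
  refine ⟨hstat, fun _ i => ?_⟩
  have hfJ : star (fun t => f t (z i)) ᵥ* Jz f B z (z i) = 0 := funext fun j => by
    simpa [Matrix.vecMul, dotProduct, Jz, mul_comm] using hstat i j
  rw [← Matrix.mulVec_mulVec, Matrix.mulVec_conjTranspose, hfJ, star_zero, Matrix.mulVec_zero,
    sub_zero]

/-- if the perturbation is locally pointwise minimal at `z ∈ R_{B⃗}`, then
`Σ_t (∂(f_t − p_t(z,·))/∂x_j)(z_i) · conj(f_t(z_i)) = 0` for all `i`, `j`, i.e.
`J_z(z_i)* f(z_i) = 0`; in particular `z` is a fixed point of the simplified Gauss-Newton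
iteration `z_i ↦ z_i − J_z(z_i)† f(z_i)` whenever `rank J_z(z_i) = n` for all `i`. -/
theorem stmt18 {N n k : ℕ} (hn : 1 ≤ n) (hN : n < N) (hk : 1 ≤ k)
    (f : Fin N → (Fin n → ℂ) → ℂ) (hf : ∀ t, AnalyticOnNhd ℂ (f t) Set.univ)
    (B : Fin N → Fin k → (Fin n → ℂ) → ℂ) (hBa : ∀ t s, AnalyticOnNhd ℂ (B t s) Set.univ)
    (z : Fin k → Fin n → ℂ) (hz : ∀ t, IsUnit (vandB (B t) z).det)
    (U : Set (Fin k → Fin n → ℂ)) (hU : IsOpen U) (hzU : z ∈ U)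
    (hmin : ∀ zt ∈ U, ∀ z' ∈ U, ∀ i : Fin k,
      (∑ t, ‖pB (B t) (f t) z (zt i)‖ ^ 2) ≤ ∑ t, ‖pB (B t) (f t) z' (zt i)‖ ^ 2) :
    (∀ (i : Fin k) (j : Fin n),
      (∑ t, pderiv' j (fun y => f t y - pB (B t) (f t) z y) (z i)
          * (starRingEnd ℂ) (f t (z i))) = 0) ∧
    ((∀ i : Fin k, (Jz f B z (z i)).rank = n) →
      ∀ i : Fin k,
        z i - (((Jz f B z (z i))ᴴ * Jz f B z (z i))⁻¹ * (Jz f B z (z i))ᴴ) *ᵥ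
            (fun t => f t (z i)) = z i) :=
  stmt18_general f hf B hBa z hz U hU hzU hmin
end
end
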